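/- arXiv:2002.01203 — 6 statements merged into one kernel-verified Lean document; each statement's English description precedes it below -/
import Mathlib

section
/- On ℝⁿ with n ≥ 3, let b₁ = eₙ and b₂(x) = e₁ + Σ_{i=2}^{n−1} x^{i+1} e_i be the input vector fields of the chained form, and define vector fields c₀ = b₁ and c_{k+1} = [c_k, b₂]. Then for every k with 1 ≤ k ≤ n−2, c_k is the constant vector field e_{n−k}. -/
/-!
`b₂` is affine, `b₂(x) = b₂(0) + S x`, where the shift `S` sends `e_{i+1}` to `e_i` for `i ≥ 2`.
The bracket of a constant field `v` with `b₂` is therefore the constant field `S v`, and starting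
from `c₀ = eₙ` the iterated brackets walk down the basis: `c_k = S^k eₙ = e_{n−k}`.
-/

/-- `b₁ = eₙ`, the n-th standard basis vector as a constant vector field (componentwise). -/
noncomputable def chainedB1 (n : ℕ) : (Fin n → ℝ) → (Fin n → ℝ) :=
  fun _ j => if j.val = n - 1 then 1 else 0

/-- `b₂(x) = e₁ + Σ_{i=2}^{n−1} x^{i+1} e_i` (componentwise, 0-based indices). -/
noncomputable def chainedB2 (n : ℕ) : (Fin n → ℝ) → (Fin n → ℝ) :=
  fun x j => if j.val = 0 then 1 else if h : j.val + 1 < n then x ⟨j.val + 1, h⟩ else 0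

/-- `c₀ = b₁`, `c_{k+1} = [c_k, b₂]`. -/
noncomputable def chainedIter (n : ℕ) : ℕ → ((Fin n → ℝ) → (Fin n → ℝ))
  | 0 => chainedB1 n
  | k + 1 => VectorField.lieBracket ℝ (chainedIter n k) (chainedB2 n)

open VectorField

theorem VectorField.lieBracket_const_left_of_hasFDerivAt {𝕜 E : Type*} [NontriviallyNormedField 𝕜]
    [NormedAddCommGroup E] [NormedSpace 𝕜 E] {W : E → E} {L : E →L[𝕜] E} {x : E} (v : E)
    (hW : HasFDerivAt W L x) :
    lieBracket 𝕜 (fun _ => v) W x = L v := by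
  simp [lieBracket, hW.fderiv]

noncomputable def chainedShift (n : ℕ) : (Fin n → ℝ) →L[ℝ] (Fin n → ℝ) :=
  ContinuousLinearMap.pi fun j =>
    if h : j.val ≠ 0 ∧ j.val + 1 < n then ContinuousLinearMap.proj ⟨j.val + 1, h.2⟩ else 0

theorem chainedShift_apply (n : ℕ) (x : Fin n → ℝ) (j : Fin n) :
    chainedShift n x j = if h : j.val ≠ 0 ∧ j.val + 1 < n then x ⟨j.val + 1, h.2⟩ else 0 := by
  simp only [chainedShift, ContinuousLinearMap.pi_apply]
  split_ifs <;> rfl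

theorem chainedB2_eq_add (n : ℕ) : chainedB2 n = fun x => chainedB2 n 0 + chainedShift n x := by
  funext x j
  simp only [chainedB2, chainedShift_apply, Pi.add_apply, Pi.zero_apply]
  split_ifs <;> simp_all

theorem hasFDerivAt_chainedB2 (n : ℕ) (x : Fin n → ℝ) :
    HasFDerivAt (chainedB2 n) (chainedShift n) x := by
  rw [chainedB2_eq_add]
  exact (chainedShift n).hasFDerivAt.const_add _

theorem chainedShift_single (n m : ℕ) (hm : 1 ≤ m) (hmn : m + 1 < n) :
    chainedShift n (Pi.single ⟨m + 1, hmn⟩ 1) = Pi.single ⟨m, by omega⟩ 1 := by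
  funext j
  rw [chainedShift_apply, Pi.single_apply]
  split_ifs <;> simp_all [Fin.ext_iff]

theorem chainedIter_eq_single (n k : ℕ) (hk : k + 2 ≤ n) :
    chainedIter n k = fun _ => Pi.single (⟨n - k - 1, by omega⟩ : Fin n) (1 : ℝ) := by
  induction k with
  | zero =>
    funext x j
    simp [chainedIter, chainedB1, Pi.single_apply, Fin.ext_iff]
  | succ k ih =>
    funext x
    have hsucc : (⟨n - k - 1, by omega⟩ : Fin n) = ⟨n - (k + 1) - 1 + 1, by omega⟩ := by
      ext; simp only; omega
    rw [chainedIter, ih (by omega), lieBracket_const_left_of_hasFDerivAt _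
      (hasFDerivAt_chainedB2 n x), hsucc, chainedShift_single n _ (by omega)]

/-- For every `1 ≤ k ≤ n − 2`, `c_k` is the constant vector field `e_{n−k}`
(0-based index `n − k − 1`). -/
theorem stmt0 (n : ℕ) (hn : 3 ≤ n) (k : ℕ) (hk2 : k ≤ n - 2) :
    chainedIter n k = fun _ => Pi.single (⟨n - k - 1, by omega⟩ : Fin n) (1 : ℝ) :=
  chainedIter_eq_single n k (by omega)
end

section
/- On ℝⁿ with n ≥ 3, let b₁ = eₙ and b₂(x) = e₁ + Σ_{i=2}^{n−1} x^{i+1} e_i. Then for every i with 0 ≤ i ≤ n−2 and every point x ∈ ℝⁿ, the 2+i vectors b₁(x), b₂(x), e_{n−1}, e_{n−2}, …, e_{n−i} are linearly independent (so the derived flag D^{(i)} of D = span{b₁,b₂} has pointwise dimension 2+i); in particular for i = n−2 these n vectors span ℝⁿ. -/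
/-- The family of `2 + i` vectors `b₁(x), b₂(x), e_{n−1}, e_{n−2}, …, e_{n−i}`
(1-based indices: the vector with family index `j ≥ 2` is `e_{n−(j−1)}`,
i.e. the standard basis vector with 0-based index `n − j`). -/
noncomputable def derivedFlagFamily (n i : ℕ) (hn : 3 ≤ n) (hi : i ≤ n - 2) (x : Fin n → ℝ) :
    Fin (i + 2) → (Fin n → ℝ) :=
  fun j =>
    if j.val = 0 then chainedB1 n x
    else if j.val = 1 then chainedB2 n x
    else if h : 2 ≤ j.val then
      Pi.single (⟨n - j.val, by omega⟩ : Fin n) (1 : ℝ)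
    else 0

/-- For every `0 ≤ i ≤ n − 2` and every `x ∈ ℝⁿ`, the `2 + i` vectors
`b₁(x), b₂(x), e_{n−1}, …, e_{n−i}` are linearly independent (so the derived flag `D^{(i)}`
of `D = span{b₁, b₂}` has pointwise dimension `2 + i`); in particular, for `i = n − 2`
these `n` vectors span all of `ℝⁿ`. -/
theorem stmt1 (n : ℕ) (hn : 3 ≤ n) (i : ℕ) (hi : i ≤ n - 2) (x : Fin n → ℝ) :
    LinearIndependent ℝ (derivedFlagFamily n i hn hi x) ∧
      (i = n - 2 →
        Submodule.span ℝ (Set.range (derivedFlagFamily n i hn hi x)) = ⊤) := by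
  have hli : LinearIndependent ℝ (derivedFlagFamily n i hn hi x) := by
    rw [Fintype.linearIndependent_iff]
    intro g hg
    have hval : ∀ k : Fin n,
        (∑ j : Fin (i + 2), g j * derivedFlagFamily n i hn hi x j k) = 0 := by
      intro k
      have h := congrFun hg k
      simpa [Finset.sum_apply] using h
    have hone : (1 : Fin (i + 2)).val = 1 := rfl
    have hzero : (0 : Fin (i + 2)).val = 0 := rfl
    -- g 1 = 0, from coordinate 0
    have h1 : g 1 = 0 := by
      have h := hval ⟨0, by omega⟩
      rw [Finset.sum_eq_single 1] at h
      · simpa [derivedFlagFamily, chainedB2, hone] using h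
      · intro j _ hj
        have hjv : j.val ≠ 1 := fun hv => hj (Fin.ext (by rw [hv, hone]))
        have hjb : j.val < i + 2 := j.isLt
        rcases Nat.eq_or_lt_of_le (Nat.zero_le j.val) with h0 | h0
        · simp [derivedFlagFamily, chainedB1, ← h0, show ¬ (0 = n - 1) by omega]
        · have h2 : 2 ≤ j.val := by omega
          simp [derivedFlagFamily, chainedB1, chainedB2, h2,
            show j.val ≠ 0 by omega, hjv, Pi.single_apply, Fin.ext_iff,
            show ¬ ((0:ℕ) = n - j.val) by omega]
      · simp
    -- g 0 = 0, from coordinate n - 1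
    have h0 : g 0 = 0 := by
      have h := hval ⟨n - 1, by omega⟩
      rw [Finset.sum_eq_single 0] at h
      · simpa [derivedFlagFamily, chainedB1, hzero] using h
      · intro j _ hj
        have hjv : j.val ≠ 0 := fun hv => hj (Fin.ext (by rw [hv, hzero]))
        have hjb : j.val < i + 2 := j.isLt
        rcases Nat.eq_or_lt_of_le (show 1 ≤ j.val by omega) with h1' | h1'
        · simp [derivedFlagFamily, chainedB2, ← h1', hjv,
            show ¬ (n - 1 = 0) by omega, show ¬ (n - 1 + 1 < n) by omega]
        · have h2 : 2 ≤ j.val := by omega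
          have hle : j.val ≤ i + 1 := by omega
          simp [derivedFlagFamily, h2, hjv, show j.val ≠ 1 by omega,
            Pi.single_apply, Fin.ext_iff, show ¬ (n - 1 = n - j.val) by omega]
      · simp
    intro j
    have hjb : j.val < i + 2 := j.isLt
    rcases Nat.lt_or_ge j.val 2 with hlt | h2
    · interval_cases h : j.val
      · rwa [show j = 0 from Fin.ext h]
      · rwa [show j = 1 from Fin.ext h]
    · -- coordinate n - j.val
      have h := hval ⟨n - j.val, by omega⟩
      rw [Finset.sum_eq_single j] at h
      · have hle : j.val ≤ i + 1 := by omega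
        simpa [derivedFlagFamily, h2, show j.val ≠ 0 by omega,
          show j.val ≠ 1 by omega, Pi.single_apply] using h
      · intro j' _ hj'
        have hjb' : j'.val < i + 2 := j'.isLt
        have hne : j'.val ≠ j.val := fun hv => hj' (Fin.ext hv)
        rcases Nat.lt_or_ge j'.val 2 with hlt' | h2'
        · interval_cases h' : j'.val
          · simp [derivedFlagFamily, chainedB1, h',
              show ¬ (n - j.val = n - 1) by omega]
          · rw [show j' = 1 from Fin.ext h', h1]; ring
        · have hle' : j'.val ≤ i + 1 := by omega
          simp [derivedFlagFamily, h2', show j'.val ≠ 0 by omega,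
            show j'.val ≠ 1 by omega, Pi.single_apply, Fin.ext_iff,
            show ¬ (n - j.val = n - j'.val) by omega]
      · simp
  refine ⟨hli, fun hieq => ?_⟩
  apply hli.span_eq_top_of_card_eq_finrank
  simp [hieq]
  omega
end

section
/- On ℝⁿ with n ≥ 4, let a(x) = Σ_{j=2}^{n−1} α^j(x¹,…,x^{j+1}) e_j be a drift vector field whose e_j-component is a smooth function of x¹,…,x^{j+1} only (the drift of the extended chained form), and let b₂(x) = e₁ + Σ_{i=2}^{n−1} x^{i+1} e_i. Then for every i with 1 ≤ i ≤ n−3, every k with n−i+1 ≤ k ≤ n, and every x ∈ ℝⁿ, the Lie bracket satisfies [e_k, a](x) ∈ span{b₂(x), eₙ, e_{n−1}, …, e_{n−i}}; that is, the drift satisfies the compatibility condition [a, C(D^{(i)})] ⊆ D^{(i)}. -/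
/-- The derived flag `D^{(i)}(x) = span{b₂(x), eₙ, e_{n−1}, …, e_{n−i}}` at a point `x`. -/
noncomputable def derivedFlag (n i : ℕ) (x : Fin n → ℝ) : Submodule ℝ (Fin n → ℝ) :=
  Submodule.span ℝ (insert (chainedB2 n x)
    {v : Fin n → ℝ | ∃ m : Fin n, n - 1 - i ≤ m.val ∧ v = Pi.single m 1})

open VectorField

lemma VectorField.lieBracket_const_left {𝕜 E : Type*} [NontriviallyNormedField 𝕜]
    [NormedAddCommGroup E] [NormedSpace 𝕜 E] (v : E) (W : E → E) (x : E) :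
    lieBracket 𝕜 (fun _ => v) W x = fderiv 𝕜 W x v := by
  simp [lieBracket_eq]

lemma fderiv_apply_eq_zero_of_forall_add_smul {𝕜 E F : Type*} [NontriviallyNormedField 𝕜]
    [NormedAddCommGroup E] [NormedSpace 𝕜 E] [NormedAddCommGroup F] [NormedSpace 𝕜 F]
    {f : E → F} {x v : E} (hf : DifferentiableAt 𝕜 f x) (hconst : ∀ t : 𝕜, f (x + t • v) = f x) :
    fderiv 𝕜 f x v = 0 := by
  rw [← hf.lineDeriv_eq_fderiv, lineDeriv, funext hconst]
  exact deriv_const _ _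

lemma Pi.mem_span_single_of_apply_eq_zero {ι R : Type*} [Fintype ι] [DecidableEq ι] [Semiring R]
    (p : ι → Prop) {v : ι → R} (hv : ∀ m, ¬ p m → v m = 0) :
    v ∈ Submodule.span R {w | ∃ m, p m ∧ w = Pi.single m 1} := by
  rw [← Finset.univ_sum_single v]
  refine Submodule.sum_mem _ fun m _ => ?_
  by_cases hm : p m
  · rw [← mul_one (v m), ← smul_eq_mul, Pi.single_smul']
    exact Submodule.smul_mem _ _ (Submodule.subset_span ⟨m, hm, rfl⟩)
  · simp [hv m hm]

lemma fderiv_single_apply_eq_zero_of_chained {n : ℕ} {a : (Fin n → ℝ) → (Fin n → ℝ)}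
    (ha : Differentiable ℝ a)
    (ha_dep : ∀ (x y : Fin n → ℝ) (j : Fin n),
      (∀ m : Fin n, m.val ≤ j.val + 1 → x m = y m) → a x j = a y j)
    {k m : Fin n} (hmk : m.val + 1 < k.val) (x : Fin n → ℝ) :
    fderiv ℝ a x (Pi.single k 1) m = 0 := by
  have hcomp : fderiv ℝ a x (Pi.single k 1) m = fderiv ℝ (fun y => a y m) x (Pi.single k 1) := by
    rw [fderiv_apply (ha x)]
    rfl
  rw [hcomp]
  refine fderiv_apply_eq_zero_of_forall_add_smul (differentiableAt_pi.1 (ha x) m) fun t => ?_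
  refine ha_dep _ _ m fun p hp => ?_
  have hpk : p ≠ k := by rintro rfl; omega
  simp [hpk]

/-- Let `a(x) = Σ_{j=2}^{n−1} α^j(x¹,…,x^{j+1}) e_j` be a smooth drift vector field of
extended chained form: its first (1-based `j = 1`) and last (1-based `j = n`) components
vanish, and its component with 0-based index `j` depends only on the coordinates with 0-based
indices `≤ j + 1` (i.e. on `x¹,…,x^{j+2}` in 1-based numbering, matching
`α^{j+1}(x¹,…,x^{j+2})`). Then for every `1 ≤ i ≤ n−3`, every 1-based `k` with
`n−i+1 ≤ k ≤ n` (0-based index `k` with `n−i ≤ k`), and every `x`,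
`[e_k, a](x) ∈ span{b₂(x), eₙ, …, e_{n−i}} = D^{(i)}(x)`;
that is, the drift satisfies `[a, C(D^{(i)})] ⊆ D^{(i)}`. -/
theorem stmt3 (n : ℕ) (a : (Fin n → ℝ) → (Fin n → ℝ))
    (ha_smooth : ContDiff ℝ (⊤ : ℕ∞) a)
    (ha_dep : ∀ (x y : Fin n → ℝ) (j : Fin n),
      (∀ m : Fin n, m.val ≤ j.val + 1 → x m = y m) → a x j = a y j)
    (i : ℕ)
    (k : Fin n) (hk : n - i ≤ k.val) (x : Fin n → ℝ) :
    VectorField.lieBracket ℝ (fun _ => Pi.single k (1 : ℝ)) a x ∈ derivedFlag n i x := by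
  have ha : Differentiable ℝ a := ha_smooth.differentiable (by simp)
  rw [lieBracket_const_left]
  refine Submodule.span_mono (Set.subset_insert _ _)
    (Pi.mem_span_single_of_apply_eq_zero _ fun m hm => ?_)
  exact fderiv_single_apply_eq_zero_of_chained ha ha_dep (by omega) x
end

section
/- For the induction motor model, let v₄(x) = μψ_d² e_ω + ηM e_ρ. Then the constant vector fields e_{I_d} and e_{I_q} commute with all four spanning fields of D₂ = span{e_{I_d}, e_{I_q}, e_{ψ_d}, v₄}: [e_{I_d}, e_{I_q}] = [e_{I_d}, e_{ψ_d}] = [e_{I_d}, v₄] = 0 and [e_{I_q}, e_{ψ_d}] = [e_{I_q}, v₄] = 0; hence e_{I_d} and e_{I_q} are Cauchy characteristic vector fields of D₂, i.e. C(D₂) ⊇ D₁ = span{e_{I_d}, e_{I_q}}, while e_{ψ_d} is not Cauchy characteristic (since [e_{ψ_d}, v₄](x) = 2μψ_d e_ω ∉ D₂(x) when ψ_d ≠ 0, μ ≠ 0, ηM ≠ 0). -/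
/-- The i-th standard basis vector of ℝ⁶; coordinates are ordered
`(θ, ω, ψ_d, ρ, I_d, I_q)`. -/
noncomputable def e (i : Fin 6) : Fin 6 → ℝ := Pi.single i 1

/-- The vector field `v₄(x) = μψ_d² e_ω + ηM e_ρ`. -/
noncomputable def v4 (μ η M : ℝ) : (Fin 6 → ℝ) → (Fin 6 → ℝ) :=
  fun x => (μ * (x 2) ^ 2) • e 1 + (η * M) • e 3

noncomputable def pr2 : (Fin 6 → ℝ) →L[ℝ] ℝ :=
  ContinuousLinearMap.proj (R := ℝ) (φ := fun _ : Fin 6 => ℝ) 2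

lemma v4_fderiv (μ η M : ℝ) (x : Fin 6 → ℝ) :
    HasFDerivAt (v4 μ η M)
      ((μ • (x 2 • pr2 + x 2 • pr2)).smulRight (e 1)) x := by
  have hp : HasFDerivAt (fun y : Fin 6 → ℝ => y 2) pr2 x := pr2.hasFDerivAt
  have h := (((hp.mul hp).const_mul μ).smul_const (e 1)).add_const ((η * M) • e 3)
  have hv : v4 μ η M = fun y => (μ * (y 2 * y 2)) • e 1 + (η * M) • e 3 := by
    funext y; simp [v4, sq]
  rw [hv]; exact h

/-- The constant vector fields `e_{I_d}` and `e_{I_q}` commute with all four spanning fields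
of `D₂ = span{e_{I_d}, e_{I_q}, e_{ψ_d}, v₄}`:
`[e_{I_d}, e_{I_q}] = [e_{I_d}, e_{ψ_d}] = [e_{I_d}, v₄] = 0` and
`[e_{I_q}, e_{ψ_d}] = [e_{I_q}, v₄] = 0`; hence `e_{I_d}` and `e_{I_q}` are Cauchy
characteristic vector fields of `D₂`, i.e. `C(D₂) ⊇ D₁ = span{e_{I_d}, e_{I_q}}`, while
`e_{ψ_d}` is not Cauchy characteristic, since `[e_{ψ_d}, v₄](x) = 2μψ_d e_ω ∉ D₂(x)`
when `ψ_d ≠ 0`, `μ ≠ 0`, `ηM ≠ 0`. -/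
theorem stmt9 (μ η M : ℝ) :
    (∀ x : Fin 6 → ℝ,
      VectorField.lieBracket ℝ (fun _ => e 4) (fun _ => e 5) x = 0 ∧
      VectorField.lieBracket ℝ (fun _ => e 4) (fun _ => e 2) x = 0 ∧
      VectorField.lieBracket ℝ (fun _ => e 4) (v4 μ η M) x = 0 ∧
      VectorField.lieBracket ℝ (fun _ => e 5) (fun _ => e 2) x = 0 ∧
      VectorField.lieBracket ℝ (fun _ => e 5) (v4 μ η M) x = 0) ∧
    (∀ x : Fin 6 → ℝ, x 2 ≠ 0 → μ ≠ 0 → η * M ≠ 0 →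
      VectorField.lieBracket ℝ (fun _ => e 2) (v4 μ η M) x = (2 * μ * x 2) • e 1 ∧
      (2 * μ * x 2) • e 1 ∉
        Submodule.span ℝ ({e 4, e 5, e 2, v4 μ η M x} : Set (Fin 6 → ℝ))) := by
  have hbr : ∀ (x : Fin 6 → ℝ) (i : Fin 6),
      VectorField.lieBracket ℝ (fun _ => e i) (v4 μ η M) x
        = (μ * (x 2 * (e i) 2 + x 2 * (e i) 2)) • e 1 := by
    intro x i
    simp only [VectorField.lieBracket, (v4_fderiv μ η M x).fderiv, fderiv_const,
      Pi.zero_apply, ContinuousLinearMap.zero_apply, sub_zero,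
      ContinuousLinearMap.smulRight_apply, ContinuousLinearMap.smul_apply,
      ContinuousLinearMap.add_apply, smul_eq_mul]
    simp [pr2]
  constructor
  · intro x
    refine ⟨?_, ?_, ?_, ?_, ?_⟩
    · simp [VectorField.lieBracket]
    · simp [VectorField.lieBracket]
    · rw [hbr]; simp [e, Pi.single_apply]
    · simp [VectorField.lieBracket]
    · rw [hbr]; simp [e, Pi.single_apply]
  · intro x hx hμ hηM
    constructor
    · rw [hbr]
      have : (e 2) 2 = 1 := by simp [e]
      rw [this]
      ring_nf
    · intro hmem
      set φ : (Fin 6 → ℝ) →ₗ[ℝ] ℝ :=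
        (η * M) • (LinearMap.proj 1 : (Fin 6 → ℝ) →ₗ[ℝ] ℝ)
          - (μ * (x 2) ^ 2) • (LinearMap.proj 3 : (Fin 6 → ℝ) →ₗ[ℝ] ℝ) with hφ
      have hle : Submodule.span ℝ ({e 4, e 5, e 2, v4 μ η M x} : Set (Fin 6 → ℝ))
          ≤ LinearMap.ker φ := by
        rw [Submodule.span_le]
        intro y hy
        simp only [Set.mem_insert_iff, Set.mem_singleton_iff] at hy
        rcases hy with rfl | rfl | rfl | rfl <;>
          simp [hφ, e, v4, Pi.single_apply] <;> ring
      have h0 : φ ((2 * μ * x 2) • e 1) = 0 := hle hmem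
      have e11 : e 1 1 = 1 := by simp [e]
      have e13 : e 1 3 = 0 := by simp [e, Pi.single_apply]
      simp only [hφ, LinearMap.sub_apply, LinearMap.smul_apply, LinearMap.proj_apply,
        Pi.smul_apply, smul_eq_mul, e11, e13] at h0
      have h1 : η * M * (2 * μ * x 2) = 0 := by linarith
      exact mul_ne_zero hηM (mul_ne_zero (mul_ne_zero two_ne_zero hμ) hx) h1
end

section
/- Let μ ≠ 0, J ≠ 0 and let (θ, ω, ψ_d, ρ, I_d, I_q) be a differentiable solution of the induction motor model on an interval I with ψ_d(t) ≠ 0 for all t. Define x₁ = θ, x₂¹ = ω, x₂² = ρ, x₂³ = ηM/(μψ_d²), x₃₂¹ = μψ_d I_q − τ_L/J, and x₃₁¹ = 2η²M/(μψ_d²) − 2η²M² I_d/(μψ_d³). Then along the solution: ẋ₁ = x₂¹, ẋ₂¹ = x₃₂¹, ẋ₂² = x₂³·x₃₂¹ + n_p·x₂¹ + (τ_L/J)·x₂³, and ẋ₂³ = x₃₁¹; i.e., the transformed variables satisfy the structurally flat triangular form of the paper (equation (10)). -/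
/-
Only `ρ` and the flux coordinate `x₂³ = ηM/(μψ_d²)` need work. Since `μψ_d² x₂³ = ηM`, the slip
term `ηM I_q/ψ_d` of `ρ̇` equals `x₂³ (x₃₂¹ + τ_L/J)`; differentiating `x₂³` along
`ψ̇_d = −ηψ_d + ηM I_d` gives `x₃₁¹`.
-/

/-- A differentiable solution of the induction motor model
`θ̇ = ω`, `ω̇ = μψ_d I_q − τ_L/J`, `ψ̇_d = −ηψ_d + ηM I_d`, `ρ̇ = n_pω + ηM I_q/ψ_d`,
`İ_d = v_d`, `İ_q = v_q` on a set `I ⊆ ℝ`. -/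
def IsMotorSolution (μ η M np τL J : ℝ) (I : Set ℝ)
    (θ ω ψ ρ Id Iq vd vq : ℝ → ℝ) : Prop :=
  ∀ t ∈ I,
    HasDerivAt θ (ω t) t ∧
    HasDerivAt ω (μ * ψ t * Iq t - τL / J) t ∧
    HasDerivAt ψ (-(η * ψ t) + η * M * Id t) t ∧
    HasDerivAt ρ (np * ω t + η * M * Iq t / ψ t) t ∧
    HasDerivAt Id (vd t) t ∧
    HasDerivAt Iq (vq t) t

theorem HasDerivAt.const_div_mul_sq {ψ : ℝ → ℝ} {ψ' t : ℝ} (c μ : ℝ)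
    (hψ : HasDerivAt ψ ψ' t) (hμ : μ ≠ 0) (ht : ψ t ≠ 0) :
    HasDerivAt (fun s => c / (μ * ψ s ^ 2)) (-(2 * c * ψ') / (μ * ψ t ^ 3)) t := by
  refine ((hasDerivAt_const t c).fun_div ((hψ.fun_pow 2).const_mul μ)
    (mul_ne_zero hμ (pow_ne_zero 2 ht))).congr_deriv ?_
  field_simp
  ring

theorem slip_rate_eq_triangular {μ η M np c ψ ω iq : ℝ} (hμ : μ ≠ 0) (hψ : ψ ≠ 0) :
    η * M / (μ * ψ ^ 2) * (μ * ψ * iq - c) + np * ω + c * (η * M / (μ * ψ ^ 2)) =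
      np * ω + η * M * iq / ψ := by
  field_simp
  ring

theorem stmt12_general (μ η M np τL J : ℝ) (hμ : μ ≠ 0)
    (I : Set ℝ) (θ ω ψ ρ Id Iq vd vq : ℝ → ℝ)
    (hsol : IsMotorSolution μ η M np τL J I θ ω ψ ρ Id Iq vd vq)
    (hψ : ∀ t ∈ I, ψ t ≠ 0) :
    ∀ t ∈ I,
      -- ẋ₁ = x₂¹
      HasDerivAt θ (ω t) t ∧
      -- ẋ₂¹ = x₃₂¹
      HasDerivAt ω (μ * ψ t * Iq t - τL / J) t ∧
      -- ẋ₂² = x₂³·x₃₂¹ + n_p·x₂¹ + (τ_L/J)·x₂³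
      HasDerivAt ρ ((η * M / (μ * (ψ t) ^ 2)) * (μ * ψ t * Iq t - τL / J) +
        np * ω t + (τL / J) * (η * M / (μ * (ψ t) ^ 2))) t ∧
      -- ẋ₂³ = x₃₁¹
      HasDerivAt (fun s => η * M / (μ * (ψ s) ^ 2))
        (2 * η ^ 2 * M / (μ * (ψ t) ^ 2) - 2 * η ^ 2 * M ^ 2 * Id t / (μ * (ψ t) ^ 3)) t := by
  intro t ht
  obtain ⟨hθ, hω, hflux, hρ, -, -⟩ := hsol t ht
  refine ⟨hθ, hω, ?_, ?_⟩
  · rwa [slip_rate_eq_triangular hμ (hψ t ht)]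
  · refine (hflux.const_div_mul_sq (η * M) μ hμ (hψ t ht)).congr_deriv ?_
    field_simp
    ring

/-- Along any solution of the induction motor model with `ψ_d ≠ 0`, the transformed
variables `x₁ = θ`, `x₂¹ = ω`, `x₂² = ρ`, `x₂³ = ηM/(μψ_d²)`,
`x₃₂¹ = μψ_d I_q − τ_L/J`, `x₃₁¹ = 2η²M/(μψ_d²) − 2η²M² I_d/(μψ_d³)` satisfy the
structurally flat triangular form (equation (10) of the paper):
`ẋ₁ = x₂¹`, `ẋ₂¹ = x₃₂¹`, `ẋ₂² = x₂³·x₃₂¹ + n_p·x₂¹ + (τ_L/J)·x₂³`, `ẋ₂³ = x₃₁¹`. -/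
theorem stmt12 (μ η M np τL J : ℝ) (hμ : μ ≠ 0) (hJ : J ≠ 0)
    (I : Set ℝ) (θ ω ψ ρ Id Iq vd vq : ℝ → ℝ)
    (hsol : IsMotorSolution μ η M np τL J I θ ω ψ ρ Id Iq vd vq)
    (hψ : ∀ t ∈ I, ψ t ≠ 0) :
    ∀ t ∈ I,
      -- ẋ₁ = x₂¹
      HasDerivAt θ (ω t) t ∧
      -- ẋ₂¹ = x₃₂¹
      HasDerivAt ω (μ * ψ t * Iq t - τL / J) t ∧
      -- ẋ₂² = x₂³·x₃₂¹ + n_p·x₂¹ + (τ_L/J)·x₂³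
      HasDerivAt ρ ((η * M / (μ * (ψ t) ^ 2)) * (μ * ψ t * Iq t - τL / J) +
        np * ω t + (τL / J) * (η * M / (μ * (ψ t) ^ 2))) t ∧
      -- ẋ₂³ = x₃₁¹
      HasDerivAt (fun s => η * M / (μ * (ψ s) ^ 2))
        (2 * η ^ 2 * M / (μ * (ψ t) ^ 2) - 2 * η ^ 2 * M ^ 2 * Id t / (μ * (ψ t) ^ 3)) t :=
  stmt12_general μ η M np τL J hμ I θ ω ψ ρ Id Iq vd vq hsol hψ
end

section
/- Let E be a finite-dimensional real normed vector space and let D be an ℝ-linear subspace of the space of maps E → E all of whose elements are C^∞ vector fields. Define D¹ = D + span_ℝ{[v, w] : v, w ∈ D}, where [·,·] is the Lie bracket of vector fields. If c ∈ D satisfies [c, v] ∈ D for every v ∈ D (i.e., c is a Cauchy characteristic vector field of D), then [c, w] ∈ D¹ for every w ∈ D¹ (i.e., c is also a Cauchy characteristic vector field of the derived flag D¹). In particular C(D) ⊆ C(D^{(1)}). -/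
/-!
The Leibniz (Jacobi) identity `[c, [v, v']] = [[c, v], v'] + [v, [c, v']]` shows that, when
`[c, D] ⊆ D`, the bracket with `c` maps every generator `[v, v']` of `D¹` into the span of
brackets of elements of `D`. Since `[c, ·]` is linear on smooth vector fields and brackets of
smooth fields are smooth, the smooth fields `w` with `[c, w] ∈ D¹` form a submodule, which
therefore contains `D¹`.
-/

open scoped ContDiff

namespace VectorField

variable {𝕜 : Type*} [NontriviallyNormedField 𝕜]
  {E : Type*} [NormedAddCommGroup E] [NormedSpace 𝕜 E]

def derivedFlag (D : Submodule 𝕜 (E → E)) : Submodule 𝕜 (E → E) :=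
  D ⊔ Submodule.span 𝕜 {u | ∃ v ∈ D, ∃ v' ∈ D, u = lieBracket 𝕜 v v'}

lemma le_derivedFlag (D : Submodule 𝕜 (E → E)) : D ≤ derivedFlag D :=
  le_sup_left

lemma lieBracket_mem_derivedFlag {D : Submodule 𝕜 (E → E)} {v v' : E → E} (hv : v ∈ D)
    (hv' : v' ∈ D) : lieBracket 𝕜 v v' ∈ derivedFlag D :=
  Submodule.mem_sup_right (Submodule.subset_span ⟨v, hv, v', hv', rfl⟩)

def IsCauchyCharacteristic (D : Submodule 𝕜 (E → E)) (c : E → E) : Prop :=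
  c ∈ D ∧ ∀ v ∈ D, lieBracket 𝕜 c v ∈ D

lemma lieBracket_add_right' {V W W₁ : E → E} (hW : Differentiable 𝕜 W)
    (hW₁ : Differentiable 𝕜 W₁) :
    lieBracket 𝕜 V (W + W₁) = lieBracket 𝕜 V W + lieBracket 𝕜 V W₁ :=
  funext fun x ↦ lieBracket_add_right (hW x) (hW₁ x)

lemma lieBracket_const_smul_right' {V W : E → E} {a : 𝕜} (hW : Differentiable 𝕜 W) :
    lieBracket 𝕜 V (a • W) = a • lieBracket 𝕜 V W :=
  funext fun x ↦ lieBracket_const_smul_right (hW x)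

def smoothBracketPreimage (c : E → E) (M : Submodule 𝕜 (E → E)) : Submodule 𝕜 (E → E) where
  carrier := {w | ContDiff 𝕜 ∞ w ∧ lieBracket 𝕜 c w ∈ M}
  zero_mem' := ⟨contDiff_const, by simpa only [lieBracket_zero_right] using M.zero_mem⟩
  add_mem' := by
    rintro w w₁ ⟨hw, hcw⟩ ⟨hw₁, hcw₁⟩
    refine ⟨hw.add hw₁, ?_⟩
    rw [lieBracket_add_right' (hw.differentiable (by simp)) (hw₁.differentiable (by simp))]
    exact M.add_mem hcw hcw₁
  smul_mem' := by
    rintro a w ⟨hw, hcw⟩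
    refine ⟨hw.const_smul a, ?_⟩
    rw [lieBracket_const_smul_right' (hw.differentiable (by simp))]
    exact M.smul_mem a hcw

variable [IsRCLikeNormedField 𝕜]

lemma leibniz_identity_lieBracket_of_contDiff {U V W : E → E} (hU : ContDiff 𝕜 2 U)
    (hV : ContDiff 𝕜 2 V) (hW : ContDiff 𝕜 2 W) :
    lieBracket 𝕜 U (lieBracket 𝕜 V W) =
      lieBracket 𝕜 (lieBracket 𝕜 U V) W + lieBracket 𝕜 V (lieBracket 𝕜 U W) :=
  funext fun _ ↦ leibniz_identity_lieBracket (minSmoothness_of_isRCLikeNormedField (𝕜 := 𝕜)).le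
    hU.contDiffAt hV.contDiffAt hW.contDiffAt

theorem isCauchyCharacteristic_derivedFlag {D : Submodule 𝕜 (E → E)} {c : E → E}
    (hD : ∀ v ∈ D, ContDiff 𝕜 ∞ v) (hc : IsCauchyCharacteristic D c) :
    IsCauchyCharacteristic (derivedFlag D) c := by
  obtain ⟨hcD, hcD_bracket⟩ := hc
  have hD₂ : ∀ v ∈ D, ContDiff 𝕜 2 v := fun v hv ↦ (hD v hv).of_le (by norm_cast)
  suffices derivedFlag D ≤ smoothBracketPreimage c (derivedFlag D) from
    ⟨le_derivedFlag D hcD, fun w hw ↦ (this hw).2⟩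
  refine sup_le (fun v hv ↦ ⟨hD v hv, le_derivedFlag D (hcD_bracket v hv)⟩) ?_
  rw [Submodule.span_le]
  rintro _ ⟨v, hv, v', hv', rfl⟩
  refine ⟨(hD v hv).lieBracket_vectorField (hD v' hv') (by norm_cast), ?_⟩
  rw [leibniz_identity_lieBracket_of_contDiff (hD₂ c hcD) (hD₂ v hv) (hD₂ v' hv')]
  exact add_mem (lieBracket_mem_derivedFlag (hcD_bracket v hv) hv')
    (lieBracket_mem_derivedFlag hv (hcD_bracket v' hv'))

end VectorField

theorem stmt19_general (E : Type*) [NormedAddCommGroup E] [NormedSpace ℝ E]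
    (D : Submodule ℝ (E → E)) (hD : ∀ v ∈ D, ContDiff ℝ (⊤ : ℕ∞) v)
    (c : E → E) (hc : c ∈ D)
    (hcChar : ∀ v ∈ D, VectorField.lieBracket ℝ c v ∈ D) :
    ∀ w ∈ D ⊔ Submodule.span ℝ
        {u : E → E | ∃ v ∈ D, ∃ v' ∈ D, u = VectorField.lieBracket ℝ v v'},
      VectorField.lieBracket ℝ c w ∈ D ⊔ Submodule.span ℝ
        {u : E → E | ∃ v ∈ D, ∃ v' ∈ D, u = VectorField.lieBracket ℝ v v'} :=
  (VectorField.isCauchyCharacteristic_derivedFlag hD ⟨hc, hcChar⟩).2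

/-- Let `E` be a finite-dimensional real normed vector space, and let `D` be an ℝ-linear
subspace of maps `E → E` all of whose elements are `C^∞` vector fields. Let
`D¹ = D + span{[v, w] : v, w ∈ D}` be the (first) derived flag of `D`. If `c ∈ D` is a
Cauchy characteristic vector field of `D`, i.e. `[c, v] ∈ D` for every `v ∈ D`, then `c`
is also a Cauchy characteristic vector field of `D¹`: `[c, w] ∈ D¹` for every `w ∈ D¹`.
In particular `C(D) ⊆ C(D^{(1)})`. -/
theorem stmt19 (E : Type*) [NormedAddCommGroup E] [NormedSpace ℝ E] [FiniteDimensional ℝ E]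
    (D : Submodule ℝ (E → E)) (hD : ∀ v ∈ D, ContDiff ℝ (⊤ : ℕ∞) v)
    (c : E → E) (hc : c ∈ D)
    (hcChar : ∀ v ∈ D, VectorField.lieBracket ℝ c v ∈ D) :
    ∀ w ∈ D ⊔ Submodule.span ℝ
        {u : E → E | ∃ v ∈ D, ∃ v' ∈ D, u = VectorField.lieBracket ℝ v v'},
      VectorField.lieBracket ℝ c w ∈ D ⊔ Submodule.span ℝ
        {u : E → E | ∃ v ∈ D, ∃ v' ∈ D, u = VectorField.lieBracket ℝ v v'} :=
  stmt19_general E D hD c hc hcChar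
end
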